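/- arXiv:1910.00851 — 5 statements merged into one kernel-verified Lean document; each statement's English description precedes it below -/
import Mathlib

section
/- Let X = [[1,1],[0,1]] and Y = [[1,0],[1,1]] in SL₂(ℤ). For integers p, q, r, s with p+r ≥ 4 and q+s ≥ 4, the matrix [[-1,-(p+r-2)],[q+s-2,(p+r-2)(q+s-2)-1]] is conjugate in GL₂(ℤ) to the product X^(p+r-4) · Y · X^(q+s-4) · Y. -/
/-
Write `A = p + r - 2`, `B = q + s - 2`, `a = A - 2`, `b = B - 2`. The matrix
`M = !![-1, -A; B, AB - 1]` and `N = X^a Y X^b Y = !![1 + a, a; 1, 1] * !![1 + b, b; 1, 1]`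
both have determinant `1` and trace `AB - 2`. Solving the linear system `P M = N P` gives an
explicit intertwiner `P` of determinant `1`, valid over any commutative ring, so `P M P⁻¹ = N`.
-/

open Matrix

variable {R : Type*}

theorem unitriangular_pow [Semiring R] (n : ℕ) :
    (!![1, 1; 0, 1] : Matrix (Fin 2) (Fin 2) R) ^ n = !![1, (n : R); 0, 1] := by
  induction n with
  | zero => simp [one_fin_two]
  | succ k ih => simp [pow_succ, ih, add_comm]

section CommRing

variable [CommRing R]

def crossConjugator (a b : R) : Matrix (Fin 2) (Fin 2) R :=
  !![(a + 1) * (b + 2) - 1, (a + 1) * ((a + 2) * (b + 2) - 1) - (a + 2);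
     b + 2, (a + 2) * (b + 2) - 1]

theorem det_crossConjugator (a b : R) : (crossConjugator a b).det = 1 := by
  rw [crossConjugator, det_fin_two_of]
  ring

theorem crossConjugator_mul (a b : R) :
    crossConjugator a b * !![-1, -(a + 2); b + 2, (a + 2) * (b + 2) - 1] =
      !![1, a; 0, 1] * !![1, 0; 1, 1] * !![1, b; 0, 1] * !![1, 0; 1, 1] *
        crossConjugator a b := by
  simp only [crossConjugator, mul_fin_two]
  ext i j
  fin_cases i <;> fin_cases j <;> simp <;> ring

theorem exists_units_conj_cross (a b : R) :
    ∃ P : (Matrix (Fin 2) (Fin 2) R)ˣ,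
      (P : Matrix (Fin 2) (Fin 2) R) * !![-1, -(a + 2); b + 2, (a + 2) * (b + 2) - 1] *
          ((P⁻¹ : (Matrix (Fin 2) (Fin 2) R)ˣ) : Matrix (Fin 2) (Fin 2) R) =
        !![1, a; 0, 1] * !![1, 0; 1, 1] * !![1, b; 0, 1] * !![1, 0; 1, 1] := by
  refine ⟨nonsingInvUnit (crossConjugator a b) (by simp [det_crossConjugator]), ?_⟩
  rw [Units.mul_inv_eq_iff_eq_mul]
  exact crossConjugator_mul a b

end CommRing

/-- The divide monodromy matrix for the cross divide is conjugate in `GL₂(ℤ)`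
to `X^(p+r-4) · Y · X^(q+s-4) · Y`. -/
theorem stmt4 (p q r s : ℤ) (h1 : 4 ≤ p + r) (h2 : 4 ≤ q + s) :
    ∃ P : (Matrix (Fin 2) (Fin 2) ℤ)ˣ,
      (P : Matrix (Fin 2) (Fin 2) ℤ) *
          !![(-1 : ℤ), -(p + r - 2); q + s - 2, (p + r - 2) * (q + s - 2) - 1] *
          ((P⁻¹ : (Matrix (Fin 2) (Fin 2) ℤ)ˣ) : Matrix (Fin 2) (Fin 2) ℤ) =
        (!![(1 : ℤ), 1; 0, 1]) ^ (p + r - 4).toNat * !![(1 : ℤ), 0; 1, 1] *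
          (!![(1 : ℤ), 1; 0, 1]) ^ (q + s - 4).toNat * !![(1 : ℤ), 0; 1, 1] := by
  have hA : p + r - 2 = ((p + r - 4).toNat : ℤ) + 2 := by omega
  have hB : q + s - 2 = ((q + s - 4).toNat : ℤ) + 2 := by omega
  rw [hA, hB, unitriangular_pow, unitriangular_pow]
  exact exists_units_conj_cross _ _
end

section
/- The polynomial p(x) = x¹² − 4x¹¹ − 4x¹⁰ − 4x⁹ − 4x⁸ − 4x⁷ − 14x⁶ − 4x⁵ − 4x⁴ − 4x³ − 4x² − 4x + 1 has a complex root z with |z| = 1 and z ∉ ℝ, and also a complex root w with w ∉ ℝ and |w| ≠ 1. -/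
/-!
The polynomial is palindromic: `p x = x ^ 6 * Q (x + x⁻¹)` with
`Q y = y⁶ - 4y⁵ - 10y⁴ + 16y³ + 21y² - 12y - 16`. A real root `y` of `Q` with `|y| < 2`
gives the roots `e^{±iθ}`, `2 cos θ = y`, of `p` on the unit circle. A non-real root `y` of `Q`
gives a root `x` of `p` that is neither real nor of modulus one, since `x + x⁻¹` is real
when `x` is real or `|x| = 1`. By the intermediate value theorem `Q` has real roots near
`-2.038`, `1.219`, `1.389` and `5.202`; dividing them out leaves a real quadratic factor of
negative discriminant (its roots are `≈ -0.887 ± 0.323 i`).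
-/

/-- The characteristic polynomial of the even ping-pong monodromy with 11
squares on the `(2,6,16)`-orbifold, as a function on `ℂ`. -/
def pingpongPolyC (x : ℂ) : ℂ :=
  x ^ 12 - 4 * x ^ 11 - 4 * x ^ 10 - 4 * x ^ 9 - 4 * x ^ 8 - 4 * x ^ 7 -
    14 * x ^ 6 - 4 * x ^ 5 - 4 * x ^ 4 - 4 * x ^ 3 - 4 * x ^ 2 - 4 * x + 1

open Set

def tracePoly {R : Type*} [CommRing R] (y : R) : R :=
  y ^ 6 - 4 * y ^ 5 - 10 * y ^ 4 + 16 * y ^ 3 + 21 * y ^ 2 - 12 * y - 16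

lemma eq_zero_of_eq_sub_mul {R : Type*} [CommRing R] [IsDomain R] {f g : R → R} {a b : R}
    (hfg : ∀ y, f y = (y - a) * g y) (hb : f b = 0) (hba : b ≠ a) : g b = 0 :=
  (mul_eq_zero.1 (hfg b ▸ hb)).resolve_left (sub_ne_zero.2 hba)

lemma tracePoly_ofReal (y : ℝ) : tracePoly (y : ℂ) = tracePoly y := by
  simp only [tracePoly]; push_cast; rfl

lemma pingpongPolyC_eq_pow_mul_tracePoly {x : ℂ} (hx : x ≠ 0) :
    pingpongPolyC x = x ^ 6 * tracePoly (x + x⁻¹) := by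
  simp only [pingpongPolyC, tracePoly]
  field_simp
  ring

lemma pingpongPolyC_eq_zero_of_tracePoly_eq_zero {x : ℂ} (hx : x ≠ 0)
    (h : tracePoly (x + x⁻¹) = 0) : pingpongPolyC x = 0 := by
  rw [pingpongPolyC_eq_pow_mul_tracePoly hx, h, mul_zero]

lemma exists_eq_zero_mem_Icc_of_mul_nonpos {f : ℝ → ℝ} {l u : ℝ}
    (hf : ContinuousOn f (Icc l u)) (hlu : l ≤ u) (hsign : f l * f u ≤ 0) :
    ∃ y ∈ Icc l u, f y = 0 := by
  have h0 : (0 : ℝ) ∈ uIcc (f l) (f u) := by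
    rw [mem_uIcc]; rcases mul_nonpos_iff.1 hsign with h | h <;> tauto
  rw [← uIcc_of_le hlu] at hf ⊢
  exact intermediate_value_uIcc hf h0

lemma continuous_tracePoly : Continuous (tracePoly : ℝ → ℝ) := by
  unfold tracePoly; fun_prop

lemma exists_quadratic_eq_zero_im_ne_zero {p q : ℝ} (h : p ^ 2 < 4 * q) :
    ∃ y : ℂ, y ^ 2 + p * y + q = 0 ∧ y.im ≠ 0 := by
  set s := √(4 * q - p ^ 2)
  have hs : 0 < s := Real.sqrt_pos.2 (by linarith)
  have hs2 : (s : ℂ) ^ 2 = 4 * q - p ^ 2 := by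
    norm_cast; exact Real.sq_sqrt (by linarith)
  refine ⟨(-p + s * Complex.I) / 2, ?_, by simp [hs.ne']⟩
  linear_combination (-1 / 4 : ℂ) * hs2 + ((s : ℂ) ^ 2 / 4) * Complex.I_sq

lemma exists_add_inv_eq (y : ℂ) : ∃ w : ℂ, w ≠ 0 ∧ w + w⁻¹ = y := by
  obtain ⟨w, hw⟩ := exists_quadratic_eq_zero (one_ne_zero (α := ℂ)) (b := -y) (c := 1)
    (IsAlgClosed.exists_eq_mul_self _)
  have hw0 : w ≠ 0 := by rintro rfl; simp at hw
  refine ⟨w, hw0, ?_⟩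
  field_simp
  linear_combination hw

lemma add_inv_eq_two_mul_re {z : ℂ} (hz : ‖z‖ = 1) : z + z⁻¹ = (2 * z.re : ℝ) := by
  rw [Complex.inv_eq_conj hz, Complex.add_conj]

lemma exists_norm_eq_one_im_ne_zero_add_inv_eq {y : ℝ} (hy : y ^ 2 < 4) :
    ∃ z : ℂ, ‖z‖ = 1 ∧ z.im ≠ 0 ∧ z + z⁻¹ = y := by
  set t := √(4 - y ^ 2)
  have ht : 0 < t := Real.sqrt_pos.2 (by linarith)
  have ht2 : t ^ 2 = 4 - y ^ 2 := Real.sq_sqrt (by linarith)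
  have hz : ‖(⟨y / 2, t / 2⟩ : ℂ)‖ = 1 := by
    rw [Complex.norm_def, Complex.normSq_mk, Real.sqrt_eq_one]; nlinarith
  refine ⟨⟨y / 2, t / 2⟩, hz, by simp [ht.ne'], ?_⟩
  rw [add_inv_eq_two_mul_re hz]; push_cast; ring

namespace TracePoly

variable {R : Type*} [CommRing R]

def quot₁ (a y : R) : R :=
  y ^ 5 + (a - 4) * y ^ 4 + (a ^ 2 - 4 * a - 10) * y ^ 3 +
    (a ^ 3 - 4 * a ^ 2 - 10 * a + 16) * y ^ 2 +
    (a ^ 4 - 4 * a ^ 3 - 10 * a ^ 2 + 16 * a + 21) * y +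
    (a ^ 5 - 4 * a ^ 4 - 10 * a ^ 3 + 16 * a ^ 2 + 21 * a - 12)

def quot₂ (a b y : R) : R :=
  y ^ 4 + (a + b - 4) * y ^ 3 +
    (a ^ 2 + a * b - 4 * a + b ^ 2 - 4 * b - 10) * y ^ 2 +
    (a ^ 3 + a ^ 2 * b - 4 * a ^ 2 + a * b ^ 2 - 4 * a * b - 10 * a + b ^ 3 -
      4 * b ^ 2 - 10 * b + 16) * y +
    (a ^ 4 + a ^ 3 * b - 4 * a ^ 3 + a ^ 2 * b ^ 2 - 4 * a ^ 2 * b -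
      10 * a ^ 2 + a * b ^ 3 - 4 * a * b ^ 2 - 10 * a * b + 16 * a + b ^ 4 -
      4 * b ^ 3 - 10 * b ^ 2 + 16 * b + 21)

def quot₃ (a b c y : R) : R :=
  y ^ 3 + (a + b + c - 4) * y ^ 2 +
    (a ^ 2 + a * b + a * c - 4 * a + b ^ 2 + b * c - 4 * b + c ^ 2 - 4 * c -
      10) * y +
    (a ^ 3 + a ^ 2 * b + a ^ 2 * c - 4 * a ^ 2 + a * b ^ 2 + a * b * c -
      4 * a * b + a * c ^ 2 - 4 * a * c - 10 * a + b ^ 3 + b ^ 2 * c -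
      4 * b ^ 2 + b * c ^ 2 - 4 * b * c - 10 * b + c ^ 3 - 4 * c ^ 2 -
      10 * c + 16)

def quot₄ (a b c d y : R) : R :=
  y ^ 2 + (a + b + c + d - 4) * y +
    (a ^ 2 + a * b + a * c + a * d - 4 * a + b ^ 2 + b * c + b * d - 4 * b +
      c ^ 2 + c * d - 4 * c + d ^ 2 - 4 * d - 10)

lemma tracePoly_eq_add_mul_quot₁ (a y : R) :
    tracePoly y = tracePoly a + (y - a) * quot₁ a y := by
  simp only [tracePoly, quot₁]; ring

lemma quot₁_eq_add_mul_quot₂ (a b y : R) :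
    quot₁ a y = quot₁ a b + (y - b) * quot₂ a b y := by
  simp only [quot₁, quot₂]; ring

lemma quot₂_eq_add_mul_quot₃ (a b c y : R) :
    quot₂ a b y = quot₂ a b c + (y - c) * quot₃ a b c y := by
  simp only [quot₂, quot₃]; ring

lemma quot₃_eq_add_mul_quot₄ (a b c d y : R) :
    quot₃ a b c y = quot₃ a b c d + (y - d) * quot₄ a b c d y := by
  simp only [quot₃, quot₄]; ring

lemma tracePoly_eq_prod_mul_quot₄ [IsDomain R] {a b c d : R}
    (ha : tracePoly a = 0) (hb : tracePoly b = 0) (hc : tracePoly c = 0)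
    (hd : tracePoly d = 0) (hba : b ≠ a) (hca : c ≠ a) (hcb : c ≠ b) (hda : d ≠ a)
    (hdb : d ≠ b) (hdc : d ≠ c) (y : R) :
    tracePoly y = (y - a) * (y - b) * (y - c) * (y - d) * quot₄ a b c d y := by
  have h₁ (y : R) : tracePoly y = (y - a) * quot₁ a y := by
    rw [tracePoly_eq_add_mul_quot₁ a, ha, zero_add]
  have h₂ (y : R) : quot₁ a y = (y - b) * quot₂ a b y := by
    rw [quot₁_eq_add_mul_quot₂ a b, eq_zero_of_eq_sub_mul h₁ hb hba, zero_add]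
  have h₃ (y : R) : quot₂ a b y = (y - c) * quot₃ a b c y := by
    rw [quot₂_eq_add_mul_quot₃ a b c, eq_zero_of_eq_sub_mul h₂
      (eq_zero_of_eq_sub_mul h₁ hc hca) hcb, zero_add]
  have h₄ (y : R) : quot₃ a b c y = (y - d) * quot₄ a b c d y := by
    rw [quot₃_eq_add_mul_quot₄ a b c d, eq_zero_of_eq_sub_mul h₃
      (eq_zero_of_eq_sub_mul h₂ (eq_zero_of_eq_sub_mul h₁ hd hda) hdb) hdc, zero_add]
  rw [h₁, h₂, h₃, h₄]
  ring

end TracePoly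

open TracePoly in
lemma exists_tracePoly_eq_zero_im_ne_zero : ∃ y : ℂ, tracePoly y = 0 ∧ y.im ≠ 0 := by
  obtain ⟨a, ⟨ha₁, ha₂⟩, ha⟩ :=
    exists_eq_zero_mem_Icc_of_mul_nonpos (l := -2.038) (u := -2.037)
      continuous_tracePoly.continuousOn (by norm_num) (by norm_num [tracePoly])
  obtain ⟨b, ⟨hb₁, hb₂⟩, hb⟩ :=
    exists_eq_zero_mem_Icc_of_mul_nonpos (l := 1.219) (u := 1.22)
      continuous_tracePoly.continuousOn (by norm_num) (by norm_num [tracePoly])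
  obtain ⟨c, ⟨hc₁, hc₂⟩, hc⟩ :=
    exists_eq_zero_mem_Icc_of_mul_nonpos (l := 1.389) (u := 1.39)
      continuous_tracePoly.continuousOn (by norm_num) (by norm_num [tracePoly])
  obtain ⟨d, ⟨hd₁, hd₂⟩, hd⟩ :=
    exists_eq_zero_mem_Icc_of_mul_nonpos (l := 5.202) (u := 5.203)
      continuous_tracePoly.continuousOn (by norm_num) (by norm_num [tracePoly])
  set p := a + b + c + d - 4
  set q := a ^ 2 + a * b + a * c + a * d - 4 * a + b ^ 2 + b * c + b * d - 4 * b +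
      c ^ 2 + c * d - 4 * c + d ^ 2 - 4 * d - 10
  have hdisc : p ^ 2 < 4 * q := by
    nlinarith [sq_nonneg (a + 2.0375), sq_nonneg (b - 1.2195), sq_nonneg (c - 1.3895),
      sq_nonneg (d - 5.2025)]
  obtain ⟨y, hy, hyim⟩ := exists_quadratic_eq_zero_im_ne_zero hdisc
  have hquot : quot₄ (a : ℂ) b c d y = y ^ 2 + p * y + q := by
    simp only [quot₄, p, q]; push_cast; ring
  refine ⟨y, ?_, hyim⟩
  have hroot {s : ℝ} (h : tracePoly s = 0) : tracePoly (s : ℂ) = 0 := by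
    rw [tracePoly_ofReal, h, Complex.ofReal_zero]
  have hne {s t : ℝ} (h : t < s) : (s : ℂ) ≠ t := Complex.ofReal_injective.ne h.ne'
  rw [tracePoly_eq_prod_mul_quot₄ (hroot ha) (hroot hb) (hroot hc) (hroot hd)
    (hne (by linarith)) (hne (by linarith)) (hne (by linarith)) (hne (by linarith))
    (hne (by linarith)) (hne (by linarith)), hquot, hy, mul_zero]

lemma exists_pingpongPolyC_eq_zero_im_ne_zero_norm_ne_one :
    ∃ w : ℂ, pingpongPolyC w = 0 ∧ w.im ≠ 0 ∧ ‖w‖ ≠ 1 := by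
  obtain ⟨y, hy, hyim⟩ := exists_tracePoly_eq_zero_im_ne_zero
  obtain ⟨w, hw, rfl⟩ := exists_add_inv_eq y
  refine ⟨w, pingpongPolyC_eq_zero_of_tracePoly_eq_zero hw hy, fun h => ?_,
    fun h => ?_⟩ <;> apply hyim
  · simp [h]
  · rw [add_inv_eq_two_mul_re h, Complex.ofReal_im]

lemma exists_pingpongPolyC_eq_zero_norm_eq_one_im_ne_zero :
    ∃ z : ℂ, pingpongPolyC z = 0 ∧ ‖z‖ = 1 ∧ z.im ≠ 0 := by
  obtain ⟨y, ⟨hy₁, hy₂⟩, hy⟩ :=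
    exists_eq_zero_mem_Icc_of_mul_nonpos (l := 1.219) (u := 1.22)
      continuous_tracePoly.continuousOn (by norm_num) (by norm_num [tracePoly])
  obtain ⟨z, hz, hzim, hzy⟩ := exists_norm_eq_one_im_ne_zero_add_inv_eq (y := y)
    (by nlinarith)
  have hz0 : z ≠ 0 := norm_ne_zero_iff.1 (by rw [hz]; exact one_ne_zero)
  refine ⟨z, pingpongPolyC_eq_zero_of_tracePoly_eq_zero hz0 ?_, hz, hzim⟩
  rw [hzy, tracePoly_ofReal, hy, Complex.ofReal_zero]

/-- The polynomial has a non-real root on the unit circle, and a non-real root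
off the unit circle. -/
theorem stmt13 :
    (∃ z : ℂ, pingpongPolyC z = 0 ∧ ‖z‖ = 1 ∧ z.im ≠ 0) ∧
    (∃ w : ℂ, pingpongPolyC w = 0 ∧ w.im ≠ 0 ∧ ‖w‖ ≠ 1) :=
  ⟨exists_pingpongPolyC_eq_zero_norm_eq_one_im_ne_zero,
    exists_pingpongPolyC_eq_zero_im_ne_zero_norm_ne_one⟩
end

section
/- Let z ∈ ℂ with z ∉ ℝ, and let k ≥ 1 be an integer with z^k ∈ ℝ. Then (conj z)^k = z^k. Consequently, if λ is a real algebraic number whose minimal polynomial over ℚ is irreducible with a non-real Galois conjugate z satisfying |z| ≠ 1, and if deg(λ^k) = deg(λ), then z^k ∉ ℝ ∪ S¹ (where S¹ denotes the unit circle). -/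
/-!
If `λ` and `λ^k` have minimal polynomials of the same degree, then `ℚ(λ^k) = ℚ(λ)`, so
`λ = g(λ^k)` for some `g ∈ ℚ[X]`. The polynomial `X - g(X^k)` vanishes at `λ`, hence at every
conjugate, so every conjugate `z` satisfies `z = g(z^k)`: distinct conjugates have distinct
`k`-th powers. For a non-real conjugate `z`, `conj z` is another conjugate, so `z^k ≠ conj z^k`,
i.e. `z^k ∉ ℝ`; and `‖z^k‖ = ‖z‖^k ≠ 1` since `‖z‖ ≠ 1`.
-/

open Polynomial IntermediateField

theorem Complex.conj_pow_eq_of_im_pow_eq_zero {z : ℂ} {k : ℕ} (h : (z ^ k).im = 0) :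
    starRingEnd ℂ z ^ k = z ^ k := by
  rw [← map_pow, Complex.conj_eq_iff_im.mpr h]

section Conjugates

variable {K L A : Type*} [Field K] [Field L] [Algebra K L] [CommRing A] [Algebra K A]

theorem IntermediateField.adjoin_simple_pow_eq_of_natDegree_minpoly_pow_eq {x : L}
    (hx : IsIntegral K x) {k : ℕ}
    (hdeg : (minpoly K (x ^ k)).natDegree = (minpoly K x).natDegree) :
    K⟮x ^ k⟯ = K⟮x⟯ := by
  have : FiniteDimensional K K⟮x⟯ := adjoin.finiteDimensional hx
  refine eq_of_le_of_finrank_eq ?_ ?_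
  · exact adjoin_simple_le_iff.mpr (pow_mem (mem_adjoin_simple_self K x) k)
  · rw [adjoin.finrank (hx.pow k), adjoin.finrank hx, hdeg]

theorem exists_aeval_pow_eq_of_natDegree_minpoly_pow_eq {x : L} (hx : IsIntegral K x) {k : ℕ}
    (hdeg : (minpoly K (x ^ k)).natDegree = (minpoly K x).natDegree) :
    ∃ g : K[X], aeval (x ^ k) g = x := by
  have hmem : x ∈ (K⟮x ^ k⟯).toSubalgebra := by
    rw [adjoin_simple_pow_eq_of_natDegree_minpoly_pow_eq hx hdeg]
    exact mem_adjoin_simple_self K x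
  rwa [adjoin_simple_toSubalgebra_of_isAlgebraic (hx.pow k).isAlgebraic,
    Algebra.adjoin_singleton_eq_range_aeval] at hmem

theorem eq_aeval_pow_of_aeval_minpoly_eq_zero {x : L} {k : ℕ} {g : K[X]}
    (hg : aeval (x ^ k) g = x) {z : A} (hz : aeval z (minpoly K x) = 0) :
    z = aeval (z ^ k) g := by
  have hroot : aeval x (X - g.comp (X ^ k)) = 0 := by
    simp [aeval_comp, hg]
  obtain ⟨q, hq⟩ := minpoly.dvd K x hroot
  have hzroot : aeval z (X - g.comp (X ^ k)) = 0 := by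
    rw [hq, map_mul, hz, zero_mul]
  simpa [aeval_comp, sub_eq_zero] using hzroot

theorem eq_of_pow_eq_of_natDegree_minpoly_pow_eq {x : L} (hx : IsIntegral K x) {k : ℕ}
    (hdeg : (minpoly K (x ^ k)).natDegree = (minpoly K x).natDegree) {z w : A}
    (hz : aeval z (minpoly K x) = 0) (hw : aeval w (minpoly K x) = 0) (hzw : z ^ k = w ^ k) :
    z = w := by
  obtain ⟨g, hg⟩ := exists_aeval_pow_eq_of_natDegree_minpoly_pow_eq hx hdeg
  rw [eq_aeval_pow_of_aeval_minpoly_eq_zero hg hz, eq_aeval_pow_of_aeval_minpoly_eq_zero hg hw,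
    hzw]

end Conjugates

theorem Complex.aeval_conj_eq_zero {p : ℚ[X]} {z : ℂ} (hz : aeval z p = 0) :
    aeval (starRingEnd ℂ z) p = 0 := by
  simpa [hz] using aeval_algHom_apply (starRingEnd ℂ).toRatAlgHom z p

/-- If `z ∉ ℝ` and `z^k ∈ ℝ` for some `k ≥ 1`, then `(conj z)^k = z^k`.
Consequently, if `λ` is a real algebraic number with a non-real Galois
conjugate `z` with `|z| ≠ 1`, and there is no degree drop from `λ` to `λ^k`,
then `z^k ∉ ℝ ∪ S¹`. -/
theorem stmt14 :
    (∀ (z : ℂ) (k : ℕ), z.im ≠ 0 → 1 ≤ k → (z ^ k).im = 0 →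
      (starRingEnd ℂ z) ^ k = z ^ k) ∧
    (∀ (lam : ℝ) (z : ℂ) (k : ℕ), IsAlgebraic ℚ lam → 1 ≤ k →
      Polynomial.aeval z (minpoly ℚ lam) = 0 → z.im ≠ 0 → ‖z‖ ≠ 1 →
      (minpoly ℚ (lam ^ k)).natDegree = (minpoly ℚ lam).natDegree →
      (z ^ k).im ≠ 0 ∧ ‖z ^ k‖ ≠ 1) := by
  refine ⟨fun z k _ _ h ↦ Complex.conj_pow_eq_of_im_pow_eq_zero h, ?_⟩
  intro lam z k hlam hk hz him hnorm hdeg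
  refine ⟨fun himk ↦ him ?_, ?_⟩
  · have hconj : starRingEnd ℂ z = z :=
      eq_of_pow_eq_of_natDegree_minpoly_pow_eq hlam.isIntegral hdeg
        (Complex.aeval_conj_eq_zero hz) hz (Complex.conj_pow_eq_of_im_pow_eq_zero himk)
    exact Complex.conj_eq_iff_im.mp hconj
  · rwa [norm_pow, Ne, pow_eq_one_iff_of_nonneg (norm_nonneg z) (by omega)]
end

section
/- Let λ be a real algebraic number of degree d with minimal polynomial m over ℚ, let k ≥ 1, and suppose ℚ(λ^k) = ℚ(λ). Then the set of Galois conjugates of λ^k is exactly {μ^k : μ a Galois conjugate of λ}. In particular, if some Galois conjugate of λ lies on the unit circle, then some Galois conjugate of λ^k lies on the unit circle. -/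
/-!
Every polynomial relation satisfied by an algebraic number is satisfied by all of its conjugates.
Applied to `q(X^k)`, where `q` is the minimal polynomial of `λ^k`, this shows that `k`-th powers of
conjugates of `λ` are conjugates of `λ^k`. Conversely, `λ ∈ ℚ(λ^k)` gives `λ = g(λ^k)` for some
`g ∈ ℚ[X]`; for a conjugate `w` of `λ^k`, the same principle applied to `m(g(X))` and `g(X)^k - X`
shows that `g(w)` is a conjugate of `λ` with `g(w)^k = w`.
-/

open IntermediateField Polynomial

section Conjugates

variable {K A L : Type*} [Field K] [CommRing L] [Algebra K L]

theorem aeval_eq_zero_of_aeval_minpoly_eq_zero [Ring A] [Algebra K A] {x : A} {z : L}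
    {p : K[X]} (hp : aeval x p = 0) (hz : aeval z (minpoly K x) = 0) : aeval z p = 0 :=
  aeval_eq_zero_of_dvd_aeval_eq_zero (minpoly.dvd K x hp) hz

theorem aeval_minpoly_aeval_eq_zero [Ring A] [Algebra K A] {x : A} {z : L}
    (hz : aeval z (minpoly K x) = 0) (f : K[X]) :
    aeval (aeval z f) (minpoly K (aeval x f)) = 0 := by
  rw [← aeval_comp]
  exact aeval_eq_zero_of_aeval_minpoly_eq_zero (by rw [aeval_comp, minpoly.aeval]) hz

theorem exists_aeval_eq_of_mem_adjoin_simple [Field A] [Algebra K A] {x y : A}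
    (hy : IsAlgebraic K y) (hx : x ∈ K⟮y⟯) : ∃ g : K[X], aeval y g = x := by
  rwa [← mem_toSubalgebra, adjoin_simple_toSubalgebra_of_isAlgebraic hy,
    Algebra.adjoin_singleton_eq_range_aeval, AlgHom.mem_range] at hx

theorem setOf_aeval_minpoly_pow_eq_image [Field A] [Algebra K A] {x : A} (hx : IsAlgebraic K x)
    {k : ℕ} (hmem : x ∈ K⟮x ^ k⟯) :
    {z : L | aeval z (minpoly K (x ^ k)) = 0} =
      (fun μ : L => μ ^ k) '' {z : L | aeval z (minpoly K x) = 0} := by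
  ext w
  constructor
  · intro hw
    obtain ⟨g, hg⟩ := exists_aeval_eq_of_mem_adjoin_simple (hx.pow k) hmem
    have hroot : aeval (aeval w g) (minpoly K x) = 0 := by
      simpa only [hg] using aeval_minpoly_aeval_eq_zero hw g
    have hpow : aeval w (g ^ k - X) = 0 :=
      aeval_eq_zero_of_aeval_minpoly_eq_zero (by simp [hg]) hw
    rw [map_sub, map_pow, aeval_X, sub_eq_zero] at hpow
    exact ⟨aeval w g, hroot, hpow⟩
  · rintro ⟨μ, hμ, rfl⟩
    simpa using aeval_minpoly_aeval_eq_zero hμ (X ^ k)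

end Conjugates

theorem stmt15_general (lam : ℝ) (hlam : IsAlgebraic ℚ lam) (k : ℕ)
    (hfield : IntermediateField.adjoin ℚ {lam ^ k} = IntermediateField.adjoin ℚ {lam}) :
    ({z : ℂ | Polynomial.aeval z (minpoly ℚ (lam ^ k)) = 0} =
      (fun μ : ℂ => μ ^ k) '' {z : ℂ | Polynomial.aeval z (minpoly ℚ lam) = 0}) ∧
    ((∃ z : ℂ, Polynomial.aeval z (minpoly ℚ lam) = 0 ∧ ‖z‖ = 1) →
      ∃ w : ℂ, Polynomial.aeval w (minpoly ℚ (lam ^ k)) = 0 ∧ ‖w‖ = 1) := by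
  have hconj := setOf_aeval_minpoly_pow_eq_image (L := ℂ) hlam
    (hfield ▸ mem_adjoin_simple_self ℚ lam)
  refine ⟨hconj, ?_⟩
  rintro ⟨z, hz, hnorm⟩
  have hzk : z ^ k ∈ {w : ℂ | aeval w (minpoly ℚ (lam ^ k)) = 0} := hconj ▸ ⟨z, hz, rfl⟩
  exact ⟨z ^ k, hzk, by rw [norm_pow, hnorm, one_pow]⟩

/-- Strenner's lemma: if `ℚ(λ^k) = ℚ(λ)`, then the Galois conjugates of `λ^k`
are exactly the `k`-th powers of the Galois conjugates of `λ`; in particular a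
conjugate on the unit circle yields a conjugate of `λ^k` on the unit circle. -/
theorem stmt15 (lam : ℝ) (hlam : IsAlgebraic ℚ lam) (k : ℕ) (hk : 1 ≤ k)
    (hfield : IntermediateField.adjoin ℚ {lam ^ k} = IntermediateField.adjoin ℚ {lam}) :
    ({z : ℂ | Polynomial.aeval z (minpoly ℚ (lam ^ k)) = 0} =
      (fun μ : ℂ => μ ^ k) '' {z : ℂ | Polynomial.aeval z (minpoly ℚ lam) = 0}) ∧
    ((∃ z : ℂ, Polynomial.aeval z (minpoly ℚ lam) = 0 ∧ ‖z‖ = 1) →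
      ∃ w : ℂ, Polynomial.aeval w (minpoly ℚ (lam ^ k)) = 0 ∧ ‖w‖ = 1) :=
  stmt15_general lam hlam k hfield
end

section
/- Let M be an n×n matrix with nonnegative integer entries whose columns (indexed by edges colored green, red, or blue) satisfy: the column of each green edge dominates the indicator of at least one blue edge; the column of each blue edge dominates the sum of the indicator of one red edge and two green edges; and the column of each red edge dominates the sum of three green-edge indicators and two red-edge indicators. Then for the vector w assigning weight 2 to green edges and weight 1 to red and blue edges, M·w ≥ (5/2)·w entrywise does NOT follow in general from a single such M, but for M = B·A a product of two matrices A, B each satisfying these column conditions, one has (B·A)·w ≥ (5/2)·w entrywise. -/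
/-- Edge colours: `0` is green, `1` is red, `2` is blue. The column conditions
for the transition matrix of the train track map induced by an antitwist: the
matrix has nonnegative integer entries; the column of each green edge dominates
the indicator of a blue edge; the column of each blue edge dominates the sum of
one red indicator and two green indicators; and the column of each red edge
dominates the sum of three green indicators and two red indicators. -/
def BacfiColCond {n : ℕ} (c : Fin n → Fin 3) (A : Matrix (Fin n) (Fin n) ℚ) : Prop :=
  (∀ i j, ∃ m : ℕ, A i j = (m : ℚ)) ∧
  (∀ j, c j = 0 → ∃ v : Fin n → ℕ, (∀ i, (v i : ℚ) ≤ A i j) ∧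
    1 ≤ ∑ i ∈ Finset.univ.filter (fun i => c i = 2), v i) ∧
  (∀ j, c j = 2 → ∃ v : Fin n → ℕ, (∀ i, (v i : ℚ) ≤ A i j) ∧
    1 ≤ ∑ i ∈ Finset.univ.filter (fun i => c i = 1), v i ∧
    2 ≤ ∑ i ∈ Finset.univ.filter (fun i => c i = 0), v i) ∧
  (∀ j, c j = 1 → ∃ v : Fin n → ℕ, (∀ i, (v i : ℚ) ≤ A i j) ∧
    3 ≤ ∑ i ∈ Finset.univ.filter (fun i => c i = 0), v i ∧
    2 ≤ ∑ i ∈ Finset.univ.filter (fun i => c i = 1), v i)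

/-- The weight vector assigning `2` to green edges and `1` to red and blue edges. -/
def bacfiWeight {n : ℕ} (c : Fin n → Fin 3) (i : Fin n) : ℚ :=
  if c i = 0 then 2 else 1

/-!
Track only a lower bound per colour. If a vector `u ≥ 0` satisfies `u i ≥ β (c i)` for a
colour vector `β = (g, r, b)`, the column conditions give `(u ⬝ A) j ≥ b, 3g + 2r, 2g + r`
on green, red and blue edges `j`; that is, the bound is transported by the transition matrix
`T` of the smallest admissible train track, with one edge of each colour. Starting from
`w = (2, 1, 1)` one step gives `(1, 8, 5)`, too small on green edges (and `T` itself is a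
counterexample for a single matrix), while two steps give `(5, 19, 10) ≥ 5/2 · (2, 1, 1)`.
-/

open Finset Matrix

/-- Entry `(k, l)` is the least number of colour-`k` edges a colour-`l` edge maps over. -/
def colourTransitionNat : Matrix (Fin 3) (Fin 3) ℕ :=
  !![0, 3, 2;
     0, 2, 1;
     1, 0, 0]

def colourTransition : Matrix (Fin 3) (Fin 3) ℚ :=
  colourTransitionNat.map (↑)

def colourWeight (k : Fin 3) : ℚ :=
  if k = 0 then 2 else 1

lemma bacfiWeight_eq_colourWeight_comp {n : ℕ} (c : Fin n → Fin 3) :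
    bacfiWeight c = colourWeight ∘ c :=
  rfl

lemma vecMul_colourTransition (β : Fin 3 → ℚ) :
    vecMul β colourTransition = ![β 2, 3 * β 0 + 2 * β 1, 2 * β 0 + β 1] := by
  ext k
  fin_cases k <;>
    simp [colourTransition, colourTransitionNat, vecMul, dotProduct, Fin.sum_univ_three] <;>
    ring

lemma vecMul_colourTransition_nonneg {β : Fin 3 → ℚ} (hβ : ∀ k, 0 ≤ β k) :
    ∀ k, 0 ≤ vecMul β colourTransition k := by
  have := hβ 0; have := hβ 1; have := hβ 2
  intro k
  fin_cases k <;> simp [vecMul_colourTransition] <;> linarith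

lemma smul_colourWeight_le_vecMul_colourTransition_sq (k : Fin 3) :
    (5 / 2 : ℚ) * colourWeight k ≤
      vecMul (vecMul colourWeight colourTransition) colourTransition k := by
  fin_cases k <;> simp [vecMul_colourTransition, colourWeight] <;> norm_num

lemma bacfiColCond_colourTransition : BacfiColCond id colourTransition := by
  refine ⟨fun i j => ⟨colourTransitionNat i j, rfl⟩, ?_, ?_, ?_⟩ <;> intro j hj <;>
    obtain rfl := hj
  · exact ⟨fun i => colourTransitionNat i 0, fun _ => le_rfl, by decide⟩
  · exact ⟨fun i => colourTransitionNat i 2, fun _ => le_rfl, by decide, by decide⟩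
  · exact ⟨fun i => colourTransitionNat i 1, fun _ => le_rfl, by decide, by decide⟩

section ColourBounds

variable {n : ℕ} {c : Fin n → Fin 3} {β : Fin 3 → ℚ} {u : Fin n → ℚ}

lemma sum_colourCount_le_vecMul (hβ : ∀ k, 0 ≤ β k) (hu : ∀ i, β (c i) ≤ u i)
    {A : Matrix (Fin n) (Fin n) ℚ} {j : Fin n} {v : Fin n → ℕ} (hv : ∀ i, (v i : ℚ) ≤ A i j) :
    ∑ k, β k * ((∑ i ∈ univ.filter (fun i => c i = k), v i : ℕ) : ℚ) ≤ vecMul u A j :=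
  calc ∑ k, β k * ((∑ i ∈ univ.filter (fun i => c i = k), v i : ℕ) : ℚ)
      = ∑ i, β (c i) * v i := by
        rw [← sum_fiberwise univ c]
        refine sum_congr rfl fun k _ => ?_
        rw [Nat.cast_sum, mul_sum]
        exact sum_congr rfl fun i hi => by rw [(mem_filter.mp hi).2]
    _ ≤ ∑ i, u i * A i j :=
        sum_le_sum fun i _ => mul_le_mul (hu i) (hv i) (Nat.cast_nonneg _)
          ((hβ (c i)).trans (hu i))
    _ = vecMul u A j := rfl

lemma BacfiColCond.exists_colourTransition_le_colourCount {A : Matrix (Fin n) (Fin n) ℚ}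
    (hA : BacfiColCond c A) (j : Fin n) :
    ∃ v : Fin n → ℕ, (∀ i, (v i : ℚ) ≤ A i j) ∧
      ∀ k, colourTransitionNat k (c j) ≤ ∑ i ∈ univ.filter (fun i => c i = k), v i := by
  obtain ⟨-, hgreen, hblue, hred⟩ := hA
  obtain hj | hj | hj : c j = 0 ∨ c j = 1 ∨ c j = 2 := by omega
  · obtain ⟨v, hv, hs2⟩ := hgreen j hj
    exact ⟨v, hv, fun k => by fin_cases k <;> simp [colourTransitionNat, hj, hs2]⟩
  · obtain ⟨v, hv, hs0, hs1⟩ := hred j hj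
    exact ⟨v, hv, fun k => by fin_cases k <;> simp [colourTransitionNat, hj, hs0, hs1]⟩
  · obtain ⟨v, hv, hs1, hs0⟩ := hblue j hj
    exact ⟨v, hv, fun k => by fin_cases k <;> simp [colourTransitionNat, hj, hs0, hs1]⟩

lemma BacfiColCond.colourTransition_le_vecMul {A : Matrix (Fin n) (Fin n) ℚ}
    (hA : BacfiColCond c A) (hβ : ∀ k, 0 ≤ β k) (hu : ∀ i, β (c i) ≤ u i) (j : Fin n) :
    vecMul β colourTransition (c j) ≤ vecMul u A j := by
  obtain ⟨v, hv, hcount⟩ := hA.exists_colourTransition_le_colourCount j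
  calc vecMul β colourTransition (c j)
      = ∑ k, β k * (colourTransitionNat k (c j) : ℚ) := rfl
    _ ≤ ∑ k, β k * ((∑ i ∈ univ.filter (fun i => c i = k), v i : ℕ) : ℚ) :=
        sum_le_sum fun k _ => mul_le_mul_of_nonneg_left (by exact_mod_cast hcount k) (hβ k)
    _ ≤ vecMul u A j := sum_colourCount_le_vecMul hβ hu hv

end ColourBounds

/-- A single matrix satisfying the column conditions need not expand the weight
vector `w` by `5/2`, but the product of two such matrices always does. -/
theorem stmt17 :
    (∃ (n : ℕ) (c : Fin n → Fin 3) (M : Matrix (Fin n) (Fin n) ℚ),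
      BacfiColCond c M ∧
      ¬ ∀ j, (5 / 2 : ℚ) * bacfiWeight c j ≤ Matrix.vecMul (bacfiWeight c) M j) ∧
    (∀ (n : ℕ) (c : Fin n → Fin 3) (A B : Matrix (Fin n) (Fin n) ℚ),
      BacfiColCond c A → BacfiColCond c B →
      ∀ j, (5 / 2 : ℚ) * bacfiWeight c j ≤ Matrix.vecMul (bacfiWeight c) (B * A) j) := by
  refine ⟨⟨3, id, colourTransition, bacfiColCond_colourTransition, fun h => ?_⟩, ?_⟩
  · have h0 := h 0
    simp [bacfiWeight_eq_colourWeight_comp, vecMul_colourTransition, colourWeight] at h0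
  · intro n c A B hA hB j
    have hw₀ : ∀ k, 0 ≤ colourWeight k := fun k => by unfold colourWeight; split_ifs <;> norm_num
    have hB_step := hB.colourTransition_le_vecMul hw₀ fun _ => le_rfl
    have hBA_step := hA.colourTransition_le_vecMul (vecMul_colourTransition_nonneg hw₀) hB_step j
    rw [← vecMul_vecMul]
    exact (smul_colourWeight_le_vecMul_colourTransition_sq (c j)).trans hBA_step
end
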